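/- arXiv:2110.02380 — 2 statements merged into one kernel-verified Lean document; each statement's English description precedes it below -/
import Mathlib

section
/- Let B be a dense *-subalgebra of a C*-algebra A. Suppose B is spectrally invariant in A, i.e., every element of B (after adjoining a unit if necessary) which is invertible in A has its inverse in B. Then every C*-seminorm p on B satisfies p(b) ≤ ‖b‖_A for all b ∈ B. -/
/-!
For self-adjoint `a ∈ B` the C⋆-identity gives `p (a ^ 2 ^ k) = p a ^ 2 ^ k`. Completing the
unitization `B̃` under the ℓ¹-seminorm `|λ| + p b` yields a Banach algebra in which, by Gelfand's
formula, the spectral radius of `a` is `p a`. Spectra only shrink along algebra homomorphisms, so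
`p a` is at most the spectral radius of `a` in `B̃`; spectral invariance makes this at most the
spectral radius in `Ã`, hence at most `‖a‖`. General `b` reduces to `a = b⋆ b`.
-/

open Filter ENNReal UniformSpace

theorem spectralRadius_eq_nnnorm_of_nnnorm_pow_two_pow {A : Type*} [NormedRing A]
    [NormedAlgebra ℂ A] [CompleteSpace A] {a : A} (ha : ∀ k : ℕ, ‖a ^ 2 ^ k‖₊ = ‖a‖₊ ^ 2 ^ k) :
    spectralRadius ℂ a = ‖a‖₊ := by
  refine tendsto_nhds_unique (f := fun _ : ℕ => (‖a‖₊ : ℝ≥0∞)) (l := atTop) ?_ tendsto_const_nhds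
  convert (spectrum.pow_nnnorm_pow_one_div_tendsto_nhds_spectralRadius a).comp
      (tendsto_pow_atTop_atTop_of_one_lt one_lt_two) using 1
  refine funext fun k => ?_
  rw [Function.comp_apply, ha, ENNReal.coe_pow, ← rpow_natCast, ← rpow_mul]
  simp

noncomputable instance UniformSpace.Completion.instNormedAlgebraOfSeminormedRing {𝕜 R : Type*}
    [NormedField 𝕜] [SeminormedRing R] [NormedAlgebra 𝕜 R] : NormedAlgebra 𝕜 (Completion R) where
  norm_smul_le := norm_smul_le

theorem spectralRadius_mono {𝕜 A B : Type*} [NormedField 𝕜] [Ring A] [Algebra 𝕜 A] [Ring B]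
    [Algebra 𝕜 B] {a : A} {b : B} (h : spectrum 𝕜 a ⊆ spectrum 𝕜 b) :
    spectralRadius 𝕜 a ≤ spectralRadius 𝕜 b :=
  biSup_mono h

theorem nnnorm_le_spectralRadius_of_nnnorm_pow_two_pow {R : Type*} [SeminormedRing R]
    [NormedAlgebra ℂ R] {a : R} (ha : ∀ k : ℕ, ‖a ^ 2 ^ k‖₊ = ‖a‖₊ ^ 2 ^ k) :
    (‖a‖₊ : ℝ≥0∞) ≤ spectralRadius ℂ a := by
  let π : R →ₐ[ℂ] Completion (SeparationQuotient R) :=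
    { Completion.coeRingHom.comp SeparationQuotient.mkRingHom with commutes' := fun _ => rfl }
  have hπ : ∀ x, ‖π x‖₊ = ‖x‖₊ := fun x => by
    ext; exact (Completion.norm_coe _).trans (SeparationQuotient.norm_mk x)
  calc (‖a‖₊ : ℝ≥0∞) = spectralRadius ℂ (π a) := by
        rw [spectralRadius_eq_nnnorm_of_nnnorm_pow_two_pow fun k => by rw [← map_pow, hπ, hπ, ha],
          hπ]
    _ ≤ spectralRadius ℂ a := spectralRadius_mono (AlgHom.spectrum_apply_subset π a)

theorem RingSeminorm.le_spectralRadius_of_pow_two_pow {R : Type*} [Ring R] [Algebra ℂ R]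
    (N : RingSeminorm R) (hN : ∀ (c : ℂ) (x : R), N (c • x) = ‖c‖ * N x) {a : R}
    (ha : ∀ k : ℕ, N (a ^ 2 ^ k) = N a ^ 2 ^ k) :
    ENNReal.ofReal (N a) ≤ spectralRadius ℂ a := by
  let := N.toSeminormedRing
  let : NormedAlgebra ℂ R := { norm_smul_le := fun c x => (hN c x).le }
  have := nnnorm_le_spectralRadius_of_nnnorm_pow_two_pow (a := a) fun k => NNReal.eq (ha k)
  rwa [← enorm_eq_nnnorm, ← ofReal_norm] at this

theorem isUnit_of_isUnit_map_of_inverse_mem_range {M N F : Type*} [Monoid M] [Monoid N]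
    [FunLike F M N] [MonoidHomClass F M N] {φ : F} (hφ : Function.Injective φ) {x : M}
    (h : ∀ y, φ x * y = 1 → y * φ x = 1 → y ∈ Set.range φ) (hx : IsUnit (φ x)) : IsUnit x := by
  obtain ⟨y, hxy, hyx⟩ := isUnit_iff_exists.mp hx
  obtain ⟨z, rfl⟩ := h y hxy hyx
  exact isUnit_iff_exists.mpr ⟨z, hφ (by rwa [map_mul, map_one]), hφ (by rwa [map_mul, map_one])⟩

theorem spectrum_subset_spectrum_map_of_inverse_mem_range {R S T : Type*} [CommSemiring R]
    [Ring S] [Ring T] [Algebra R S] [Algebra R T] {φ : S →ₐ[R] T} (hφ : Function.Injective φ)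
    (h : ∀ x y, φ x * y = 1 → y * φ x = 1 → y ∈ Set.range φ) (x : S) :
    spectrum R x ⊆ spectrum R (φ x) := by
  intro r hr hu
  refine hr (isUnit_of_isUnit_map_of_inverse_mem_range hφ (h _) ?_)
  rwa [map_sub, AlgHom.commutes]

def RingSeminorm.restrict {𝕜 A S : Type*} [NormedField 𝕜] [NonUnitalRing A] [Module 𝕜 A]
    [SetLike S A] [NonUnitalSubringClass S A] (B : S) (p : A → ℝ)
    (hp_smul : ∀ b ∈ B, ∀ c : 𝕜, p (c • b) = ‖c‖ * p b)
    (hp_add : ∀ b ∈ B, ∀ b' ∈ B, p (b + b') ≤ p b + p b')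
    (hp_mul : ∀ b ∈ B, ∀ b' ∈ B, p (b * b') ≤ p b * p b') : RingSeminorm B where
  toFun b := p b
  map_zero' := by simpa using hp_smul 0 (zero_mem B) 0
  add_le' b b' := hp_add b b.2 b' b'.2
  neg' b := by simpa using hp_smul b b.2 (-1)
  mul_le' b b' := hp_mul b b.2 b' b'.2

namespace Unitization

section l1

variable {𝕜 E : Type*} [NormedField 𝕜] [NonUnitalRing E] [Module 𝕜 E] [IsScalarTower 𝕜 E E]
  [SMulCommClass 𝕜 E E] (q : RingSeminorm E) (hq : ∀ (c : 𝕜) (x : E), q (c • x) = ‖c‖ * q x)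

def l1RingSeminorm : RingSeminorm (Unitization 𝕜 E) where
  toFun x := ‖x.fst‖ + q x.snd
  map_zero' := by simp
  add_le' x y := by
    simp only [fst_add, snd_add]
    linarith [norm_add_le x.fst y.fst, map_add_le_add q x.snd y.snd]
  neg' x := by simp
  mul_le' x y := by
    have hsnd : q (x.fst • y.snd + y.fst • x.snd + x.snd * y.snd) ≤
        ‖x.fst‖ * q y.snd + ‖y.fst‖ * q x.snd + q x.snd * q y.snd := by
      grw [map_add_le_add, map_add_le_add, hq, hq, map_mul_le_mul]
    simp only [fst_mul, snd_mul, norm_mul]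
    nlinarith [hsnd]

theorem l1RingSeminorm_apply (x : Unitization 𝕜 E) :
    l1RingSeminorm q hq x = ‖x.fst‖ + q x.snd :=
  rfl

theorem l1RingSeminorm_inr (x : E) : l1RingSeminorm q hq (x : Unitization 𝕜 E) = q x := by
  simp [l1RingSeminorm_apply]

theorem l1RingSeminorm_smul (c : 𝕜) (x : Unitization 𝕜 E) :
    l1RingSeminorm q hq (c • x) = ‖c‖ * l1RingSeminorm q hq x := by
  simp only [l1RingSeminorm_apply, fst_smul, snd_smul, norm_smul, hq]
  ring

theorem l1RingSeminorm_inr_pow_two_pow [StarMul E] (hq_cstar : ∀ x : E, q (star x * x) = q x ^ 2)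
    {x : E} (hx : IsSelfAdjoint x) (k : ℕ) :
    l1RingSeminorm q hq ((x : Unitization 𝕜 E) ^ 2 ^ k) = l1RingSeminorm q hq x ^ 2 ^ k := by
  induction k generalizing x with
  | zero => simp
  | succ k ih =>
    have hxx : IsSelfAdjoint (x * x) := by
      simpa only [hx.star_eq] using IsSelfAdjoint.star_mul_self x
    have hq_sq : q (x * x) = q x ^ 2 := by simpa only [hx.star_eq] using hq_cstar x
    rw [pow_succ', pow_mul, sq, ← inr_mul, ih hxx, l1RingSeminorm_inr, l1RingSeminorm_inr, hq_sq,
      ← pow_mul, ← pow_succ']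

end l1

theorem spectrum_subset_spectrum_starMap_subtype {R A : Type*} [CommRing R] [StarRing R]
    [NonUnitalRing A] [StarRing A] [Module R A] [SMulCommClass R A A] [IsScalarTower R A A]
    [StarModule R A] (B : NonUnitalStarSubalgebra R A)
    (hspec : ∀ x : Unitization R A, x.snd ∈ B →
      ∀ y : Unitization R A, x * y = 1 → y * x = 1 → y.snd ∈ B)
    (x : Unitization R B) :
    spectrum R x ⊆ spectrum R (starMap (NonUnitalStarSubalgebraClass.subtype B) x) := by
  refine spectrum_subset_spectrum_map_of_inverse_mem_range
    (φ := (starMap (NonUnitalStarSubalgebraClass.subtype B)).toAlgHom)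
    (starMap_injective Subtype.val_injective) (fun z y hzy hyz => ?_) x
  have hy : y.snd ∈ B := hspec _ (by simp [algebraMap_eq_inl]) y hzy hyz
  exact ⟨inl y.fst + inr ⟨y.snd, hy⟩, by ext <;> simp [algebraMap_eq_inl]⟩

end Unitization

theorem cstar_seminorm_le_norm_of_spectrally_invariant_general
    {A : Type*} [NonUnitalCStarAlgebra A]
    (B : NonUnitalStarSubalgebra ℂ A)
    (hspec : ∀ x : Unitization ℂ A, x.snd ∈ B →
      ∀ y : Unitization ℂ A, x * y = 1 → y * x = 1 → y.snd ∈ B)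
    (p : A → ℝ)
    (hp_smul : ∀ b ∈ B, ∀ c : ℂ, p (c • b) = ‖c‖ * p b)
    (hp_add : ∀ b ∈ B, ∀ b' ∈ B, p (b + b') ≤ p b + p b')
    (hp_mul : ∀ b ∈ B, ∀ b' ∈ B, p (b * b') ≤ p b * p b')
    (hp_cstar : ∀ b ∈ B, p (star b * b) = p b ^ 2) :
    ∀ b ∈ B, p b ≤ ‖b‖ := by
  intro b hb
  let q := RingSeminorm.restrict B p hp_smul hp_add hp_mul
  have hq_smul : ∀ (c : ℂ) (d : B), q (c • d) = ‖c‖ * q d := fun c d => hp_smul d d.2 c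
  let N := Unitization.l1RingSeminorm q hq_smul
  let ι := Unitization.starMap (NonUnitalStarSubalgebraClass.subtype B)
  set a : B := star ⟨b, hb⟩ * ⟨b, hb⟩
  have key : ENNReal.ofReal (p a) ≤ ENNReal.ofReal ‖(a : A)‖ := calc
    ENNReal.ofReal (p a) = ENNReal.ofReal (N a) := by rw [Unitization.l1RingSeminorm_inr]; rfl
    _ ≤ spectralRadius ℂ (a : Unitization ℂ B) :=
      N.le_spectralRadius_of_pow_two_pow (Unitization.l1RingSeminorm_smul q hq_smul)
        (Unitization.l1RingSeminorm_inr_pow_two_pow q hq_smul (fun d => hp_cstar d d.2)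
          (.star_mul_self _))
    _ ≤ spectralRadius ℂ (ι a) :=
      spectralRadius_mono (Unitization.spectrum_subset_spectrum_starMap_subtype B hspec _)
    _ ≤ ‖ι a‖₊ := spectrum.spectralRadius_le_nnnorm _
    _ = ENNReal.ofReal ‖(a : A)‖ := by
      rw [Unitization.starMap_inr, Unitization.nnnorm_inr, ← enorm_eq_nnnorm, ofReal_norm]
      rfl
  have hsq : p b ^ 2 ≤ ‖b‖ ^ 2 := by
    rw [← hp_cstar b hb, sq, ← CStarRing.norm_star_mul_self]
    exact (ENNReal.ofReal_le_ofReal_iff (norm_nonneg _)).1 key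
  exact (le_abs_self _).trans (abs_le_of_sq_le_sq hsq (norm_nonneg _))

/-- Let `B` be a dense *-subalgebra of a C*-algebra `A` which is spectrally invariant in `A`
(i.e. in the unitizations, inverses taken in `Ã` of elements of `B̃` lie in `B̃`).  Then every
C*-seminorm `p` on `B` satisfies `p(b) ≤ ‖b‖_A` for all `b ∈ B`. -/
theorem cstar_seminorm_le_norm_of_spectrally_invariant
    {A : Type*} [NonUnitalCStarAlgebra A] [StarModule ℂ A]
    (B : NonUnitalStarSubalgebra ℂ A)
    (hdense : Dense (B : Set A))
    (hspec : ∀ x : Unitization ℂ A, x.snd ∈ B →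
      ∀ y : Unitization ℂ A, x * y = 1 → y * x = 1 → y.snd ∈ B)
    (p : A → ℝ)
    (hp_nonneg : ∀ b ∈ B, 0 ≤ p b)
    (hp_smul : ∀ b ∈ B, ∀ c : ℂ, p (c • b) = ‖c‖ * p b)
    (hp_add : ∀ b ∈ B, ∀ b' ∈ B, p (b + b') ≤ p b + p b')
    (hp_mul : ∀ b ∈ B, ∀ b' ∈ B, p (b * b') ≤ p b * p b')
    (hp_star : ∀ b ∈ B, p (star b) = p b)
    (hp_cstar : ∀ b ∈ B, p (star b * b) = p b ^ 2) :
    ∀ b ∈ B, p b ≤ ‖b‖ :=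
  cstar_seminorm_le_norm_of_spectrally_invariant_general B hspec p hp_smul hp_add hp_mul hp_cstar
end

section
/- Let A be a unital algebra whose unit 1 does not belong to the subalgebra B, and let Ḃ be the subalgebra of A generated by B and 1. Then Ḃ is spectrally invariant in A if and only if (i) the unitization B̃ is spectrally invariant in Ã and (ii) no element of B is invertible in A. -/
/-!
The algebra map `collapse : Ã → A`, `(r, a) ↦ r • 1 + a`, sends `B̃` onto `Ḃ` and is injective
on each fibre of `fst`. So an inverse `c` of `collapse x` in `A` lifts to the inverse
`(x.fst⁻¹, c - x.fst⁻¹ • 1)` of `x` as soon as `x.fst ≠ 0`, and since `B` is an ideal of `Ḃ`,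
an inverse of `x ∈ B̃` whose image lies in `Ḃ` lies in `B̃`. The elements of `Ḃ` with
`fst = 0` are those of `B`: under (ii) they are not invertible at all, and conversely an inverse
`c ∈ Ḃ` of `b ∈ B` would give `1 = c b ∈ B`.
-/

namespace Unitization

variable {R A : Type*} [CommRing R] [Ring A] [Algebra R A]

abbrev collapse : Unitization R A →ₐ[R] A :=
  lift (NonUnitalAlgHom.id R A)

theorem collapse_apply (x : Unitization R A) : collapse x = x.fst • (1 : A) + x.snd := by
  simp [Algebra.algebraMap_eq_smul_one]

theorem collapse_inl_add_inr (r : R) (a : A) :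
    collapse (inl r + inr a : Unitization R A) = r • (1 : A) + a := by
  rw [collapse_apply]
  simp

/-- `collapse` only loses the first coordinate: its kernel is spanned by `(1, -1)`. -/
theorem eq_of_fst_eq_of_collapse_eq {x y : Unitization R A} (hfst : x.fst = y.fst)
    (h : collapse x = collapse y) : x = y := by
  refine Unitization.ext hfst ?_
  rw [collapse_apply, collapse_apply, hfst] at h
  exact add_left_cancel h

theorem exists_mul_eq_one_of_collapse {𝕜 : Type*} [Field 𝕜] [Algebra 𝕜 A]
    {x : Unitization 𝕜 A} (hx : x.fst ≠ 0) {c : A} (h₁ : collapse x * c = 1)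
    (h₂ : c * collapse x = 1) :
    ∃ y : Unitization 𝕜 A, x * y = 1 ∧ y * x = 1 ∧ collapse y = c := by
  set y : Unitization 𝕜 A := inl x.fst⁻¹ + inr (c - x.fst⁻¹ • (1 : A))
  have hy : collapse y = c := by rw [collapse_inl_add_inr, add_sub_cancel]
  have hyfst : y.fst = x.fst⁻¹ := by simp only [y, fst_add, fst_inl, fst_inr, add_zero]
  refine ⟨y, ?_, ?_, hy⟩ <;> refine eq_of_fst_eq_of_collapse_eq ?_ ?_
  · rw [fst_mul, hyfst, mul_inv_cancel₀ hx, fst_one]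
  · rw [map_mul, hy, h₁, map_one]
  · rw [fst_mul, hyfst, inv_mul_cancel₀ hx, fst_one]
  · rw [map_mul, hy, h₂, map_one]

end Unitization

namespace NonUnitalSubalgebra

open Unitization

section Semiring

variable {R A : Type*} [CommSemiring R] [Semiring A] [Algebra R A] {B : NonUnitalSubalgebra R A}

theorem mul_smul_one_add_mem {b b' : A} (hb : b ∈ B) (hb' : b' ∈ B) (β : R) :
    b * (β • (1 : A) + b') ∈ B := by
  rw [mul_add, mul_smul_one]
  exact B.add_mem (B.smul_mem β hb) (B.mul_mem hb hb')

theorem smul_one_add_mul_mem {b b' : A} (hb : b ∈ B) (hb' : b' ∈ B) (β : R) :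
    (β • (1 : A) + b') * b ∈ B := by
  rw [add_mul, smul_one_mul]
  exact B.add_mem (B.smul_mem β hb) (B.mul_mem hb' hb)

end Semiring

/-- `B` is an ideal of `Ḃ`, so the second coordinate of `x * y = 1` forces
`x.fst • y.snd ∈ B`, and `x.fst` is invertible. -/
theorem snd_mem_of_mul_eq_one {𝕜 A : Type*} [Field 𝕜] [Ring A] [Algebra 𝕜 A]
    {B : NonUnitalSubalgebra 𝕜 A} {x y : Unitization 𝕜 A} (hx : x.snd ∈ B) (hxy : x * y = 1)
    (hy : ∃ β : 𝕜, ∃ b ∈ B, collapse y = β • (1 : A) + b) : y.snd ∈ B := by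
  obtain ⟨β, b, hb, hy⟩ := hy
  have hx₀ : x.fst ≠ 0 := left_ne_zero_of_mul_eq_one (by simpa using congrArg (·.fst) hxy)
  have hysnd : y.snd = (β - y.fst) • (1 : A) + b := by
    rw [sub_smul, sub_add_eq_add_sub, ← hy, collapse_apply, add_sub_cancel_left]
  have hsnd : x.fst • y.snd = -(y.fst • x.snd + x.snd * y.snd) := by
    rw [eq_neg_iff_add_eq_zero, ← add_assoc, ← snd_mul, hxy, snd_one]
  have hmem : x.fst • y.snd ∈ B := by
    rw [hsnd, hysnd]
    exact B.neg_mem (B.add_mem (B.smul_mem _ hx) (mul_smul_one_add_mem hx hb _))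
  exact (B.toSubmodule.smul_mem_iff hx₀).mp hmem

end NonUnitalSubalgebra

/-- Let `A` be a unital complex algebra whose unit does not belong to the (non-unital)
subalgebra `B`, and let `Ḃ = {β·1 + b : β ∈ ℂ, b ∈ B}` be the subalgebra of `A` generated by
`B` and `1`.  Then `Ḃ` is spectrally invariant in `A` if and only if (i) the unitization `B̃`
is spectrally invariant in `Ã` and (ii) no element of `B` is invertible in `A`. -/
theorem dot_spectrally_invariant_iff
    {A : Type*} [Ring A] [Algebra ℂ A] (B : NonUnitalSubalgebra ℂ A)
    (hone : (1 : A) ∉ B) :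
    (∀ (β : ℂ), ∀ b ∈ B, ∀ c : A,
        (β • (1 : A) + b) * c = 1 → c * (β • (1 : A) + b) = 1 →
        ∃ β' : ℂ, ∃ b' ∈ B, c = β' • (1 : A) + b') ↔
      ((∀ x : Unitization ℂ A, x.snd ∈ B →
          ∀ y : Unitization ℂ A, x * y = 1 → y * x = 1 → y.snd ∈ B) ∧
        ∀ b ∈ B, ¬ IsUnit (b : A)) := by
  open Unitization NonUnitalSubalgebra in
  constructor
  · intro H
    refine ⟨fun x hx y hxy hyx => ?_, fun b hb ⟨u, hu⟩ => hone ?_⟩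
    · have hx' : collapse x = x.fst • (1 : A) + x.snd := collapse_apply x
      refine snd_mem_of_mul_eq_one hx hxy (H x.fst x.snd hx (collapse y) ?_ ?_)
      · rw [← hx', ← map_mul, hxy, map_one]
      · rw [← hx', ← map_mul, hyx, map_one]
    · obtain ⟨β', b', hb', hu'⟩ := H 0 b hb ↑u⁻¹ (by simp [← hu]) (by simp [← hu])
      rw [← u.inv_mul, hu', hu]
      exact smul_one_add_mul_mem hb hb' β'
  · rintro ⟨Hi, Hii⟩ β b hb c hc₁ hc₂
    have hβ : β ≠ 0 := by
      rintro rfl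
      rw [zero_smul, zero_add] at hc₁ hc₂
      exact Hii b hb ⟨⟨b, c, hc₁, hc₂⟩, rfl⟩
    set x : Unitization ℂ A := inl β + inr b
    have hxfst : x.fst = β := by simp only [x, fst_add, fst_inl, fst_inr, add_zero]
    have hxsnd : x.snd = b := by simp only [x, snd_add, snd_inl, snd_inr, zero_add]
    obtain ⟨y, hxy, hyx, hy⟩ := exists_mul_eq_one_of_collapse (hxfst ▸ hβ)
      (c := c) (by rw [collapse_inl_add_inr, hc₁]) (by rw [collapse_inl_add_inr, hc₂])
    exact ⟨y.fst, y.snd, Hi x (hxsnd ▸ hb) y hxy hyx, hy ▸ collapse_apply y⟩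
end
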